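/- Let (X, G, Φ) be a dynamical system where X is a compact totally disconnected Hausdorff space, let S be a finite subset of G, and let {𝒰_λ}_{λ∈Λ} be a cofinal directed subset of Part(X). If Φ has the S-shadowing property, then the inverse limit system (lim⟵{ι, 𝒫𝒪_S(𝒰_λ)}, G, σ*) is conjugate to (lim⟵{ι, 𝒪(𝒰_λ)}, G, σ*); moreover both inverse systems (ι, 𝒫𝒪_S(𝒰_λ)) and (ι, 𝒪(𝒰_λ)) satisfy the Mittag-Leffler condition. -/

import Mathlib

/-!
By the shadowing property, every level `l` has a finer level `m` such that, for all `n ≥ m`, the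
coarsening to `𝒰 l` of a pseudo-orbit pattern over `𝒰 n` is the orbit pattern of a shadowing point.
Since orbit patterns also lift to every finer partition, the images at level `l` of both inverse
systems are, from level `m` on, exactly the orbit patterns over `𝒰 l`: this is the Mittag-Leffler
condition. It also shows that every thread of pseudo-orbit patterns is a thread of orbit
patterns, so the two inverse limits are the same subset of `∏ l, (𝒰 l)^G` and the identity is a
conjugacy.
-/

open Set

universe u

/-! ### Dynamical systems: actions of a countable discrete group by homeomorphisms -/

/-- An action of a group `G` on a topological space `X`: each `act g` is a homeomorphism
(continuity of the inverse follows from `act g⁻¹`). -/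
structure DynAction (G X : Type u) [Group G] [TopologicalSpace X] where
  act : G → X → X
  continuous_act : ∀ g : G, Continuous (act g)
  act_one : ∀ x : X, act 1 x = x
  act_mul : ∀ (g g' : G) (x : X), act (g * g') x = act g (act g' x)

section Covers

variable {G X : Type u} [Group G] [TopologicalSpace X]

/-- A finite open cover of `X`. -/
def IsFOC (𝒰 : Finset (Set X)) : Prop :=
  (∀ U ∈ 𝒰, IsOpen U) ∧ ⋃₀ (𝒰 : Set (Set X)) = Set.univ

/-- A finite partition of `X` into nonempty clopen sets. -/
def IsClopenPartition (𝒰 : Finset (Set X)) : Prop :=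
  (∀ U ∈ 𝒰, IsClopen U ∧ U.Nonempty) ∧ ⋃₀ (𝒰 : Set (Set X)) = Set.univ ∧
    ∀ U ∈ 𝒰, ∀ V ∈ 𝒰, U ≠ V → U ∩ V = ∅

/-- `𝒱` refines `𝒰`: every member of `𝒱` is contained in a member of `𝒰`. -/
def Refines (𝒱 𝒰 : Finset (Set X)) : Prop :=
  ∀ V ∈ 𝒱, ∃ U ∈ 𝒰, V ⊆ U

/-- `{U g}` is a pattern of the `(S,𝒰)`-pseudo-orbit `{x g}`:
all `U g` belong to `𝒰`, and `x (s*g) ∈ U (s*g)` and `Φ_s (x g) ∈ U (s*g)`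
for all `g ∈ G`, `s ∈ S`. -/
def IsPseudoOrbitPattern (Φ : DynAction G X) (S : Set G) (𝒰 : Finset (Set X))
    (x : G → X) (U : G → Set X) : Prop :=
  (∀ g : G, U g ∈ 𝒰) ∧
    ∀ g : G, ∀ s ∈ S, x (s * g) ∈ U (s * g) ∧ Φ.act s (x g) ∈ U (s * g)

/-- `{x g}` is an `(S,𝒰)`-pseudo-orbit. -/
def IsPseudoOrbit (Φ : DynAction G X) (S : Set G) (𝒰 : Finset (Set X)) (x : G → X) : Prop :=
  ∃ U : G → Set X, IsPseudoOrbitPattern Φ S 𝒰 x U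

/-- `z` `𝒰`-shadows the family `{x g}`. -/
def Shadows (Φ : DynAction G X) (𝒰 : Finset (Set X)) (z : X) (x : G → X) : Prop :=
  ∀ g : G, ∃ U ∈ 𝒰, Φ.act g z ∈ U ∧ x g ∈ U

/-- The (topological) `S`-shadowing property. -/
def ShadowingProperty (Φ : DynAction G X) (S : Set G) : Prop :=
  ∀ 𝒰 : Finset (Set X), IsFOC 𝒰 → ∃ 𝒱 : Finset (Set X), IsFOC 𝒱 ∧
    ∀ x : G → X, IsPseudoOrbit Φ S 𝒱 x → ∃ z : X, Shadows Φ 𝒰 z x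

/-! ### Equivariant maps, factor maps, conjugacies -/

def IsEquivariant {Y : Type u} [TopologicalSpace Y]
    (ΦX : DynAction G X) (ΦY : DynAction G Y) (f : X → Y) : Prop :=
  ∀ (g : G) (x : X), f (ΦX.act g x) = ΦY.act g (f x)

/-- `f` is a factor map from `(X,G,ΦX)` onto `(Y,G,ΦY)`. -/
def IsFactorMap {Y : Type u} [TopologicalSpace Y]
    (ΦX : DynAction G X) (ΦY : DynAction G Y) (f : X → Y) : Prop :=
  Continuous f ∧ Function.Surjective f ∧ IsEquivariant ΦX ΦY f

/-- `f` is a conjugacy (bijective factor map). -/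
def IsConjugacy {Y : Type u} [TopologicalSpace Y]
    (ΦX : DynAction G X) (ΦY : DynAction G Y) (f : X → Y) : Prop :=
  Continuous f ∧ Function.Bijective f ∧ IsEquivariant ΦX ΦY f

end Covers

/-! ### Shifts, subshifts, shifts of finite type -/

/-- The shift action on `A^G`: `(σ_g x) h = x (h * g)`. -/
def shift (G A : Type u) [Group G] (g : G) (x : G → A) : G → A :=
  fun h => x (h * g)

/-- The full shift `A^G` (product topology) as a dynamical system. -/
def shiftDyn (G A : Type u) [Group G] [TopologicalSpace A] : DynAction G (G → A) where
  act := shift G A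
  continuous_act g := continuous_pi fun h => continuous_apply (h * g)
  act_one x := by funext h; simp [shift]
  act_mul g g' x := by funext h; simp [shift, mul_assoc]

/-- A subshift: a closed shift-invariant subset of the full shift `A^G`. -/
def IsSubshift {G A : Type u} [Group G] [TopologicalSpace A] (Y : Set (G → A)) : Prop :=
  IsClosed Y ∧ ∀ g : G, ∀ x ∈ Y, shift G A g x ∈ Y

/-- The cylinder set determined by the values of `P` on the finite shape `B`. -/
def cylinder {G A : Type u} (B : Finset G) (P : G → A) : Set (G → A) :=
  {y | ∀ b ∈ B, y b = P b}

/-- The language of `Y ⊆ A^G` over the finite shape `B` (a pattern is recorded by any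
function `G → A` with the prescribed values on `B`). -/
def language {G A : Type u} (B : Finset G) (Y : Set (G → A)) : Set (G → A) :=
  {P | (cylinder B P ∩ Y).Nonempty}

/-- `Y` is a shift of finite type over the finite shape `B`: it is cut out by a family of
forbidden patterns on `B`. -/
def IsSFTOver {G A : Type u} [Group G] (B : Finset G) (Y : Set (G → A)) : Prop :=
  ∃ ℱ : Set (G → A), Y = {x | ∀ g : G, ∀ P ∈ ℱ, shift G A g x ∉ cylinder B P}

/-- The shift action restricted to a subshift. -/
def subshiftDyn {G A : Type u} [Group G] [TopologicalSpace A] (Y : Set (G → A))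
    (hY : IsSubshift Y) : DynAction G ↥Y where
  act g x := ⟨shift G A g x.1, hY.2 g x.1 x.2⟩
  continuous_act g := Continuous.subtype_mk
    ((continuous_pi fun h => continuous_apply (h * g)).comp continuous_subtype_val) _
  act_one x := by apply Subtype.ext; funext h; simp [shift]
  act_mul g g' x := by apply Subtype.ext; funext h; simp [shift, mul_assoc]

/-! ### Hitting time sets and mixing-type properties -/

section Mixing

variable {G X : Type u} [Group G] [TopologicalSpace X]

/-- The hitting time set `N(U,V) = {g ≠ e : U ∩ Φ_{g⁻¹}(V) ≠ ∅}`. -/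
def hittingTimes (Φ : DynAction G X) (U V : Set X) : Set G :=
  {g : G | g ≠ 1 ∧ (U ∩ Φ.act g⁻¹ '' V).Nonempty}

/-- Topological mixing: `G \ N(U,V)` is finite for all nonempty open `U, V`. -/
def IsMixing (Φ : DynAction G X) : Prop :=
  ∀ U V : Set X, IsOpen U → IsOpen V → U.Nonempty → V.Nonempty →
    ((hittingTimes Φ U V)ᶜ : Set G).Finite

/-- Minimality: there is no nonempty proper closed invariant subset. -/
def IsMinimal (Φ : DynAction G X) : Prop :=
  ∀ K : Set X, IsClosed K → (∀ g : G, ∀ x ∈ K, Φ.act g x ∈ K) →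
    K = ∅ ∨ K = Set.univ

end Mixing

/-! ### Orbit spaces and pseudo-orbit spaces of finite covers -/

/-- An element of the finite cover `𝒰`, regarded as a letter of a (discrete) finite
alphabet. -/
structure CoverElt {X : Type u} (𝒰 : Finset (Set X)) where
  val : Set X
  mem : val ∈ 𝒰

instance {X : Type u} (𝒰 : Finset (Set X)) : TopologicalSpace (CoverElt 𝒰) := ⊥
instance {X : Type u} (𝒰 : Finset (Set X)) : DiscreteTopology (CoverElt 𝒰) := ⟨rfl⟩
instance {X : Type u} (𝒰 : Finset (Set X)) : Finite (CoverElt 𝒰) :=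
  Finite.of_injective (fun e => (⟨e.val, e.mem⟩ : {U : Set X // U ∈ 𝒰}))
    (fun a b hab => by cases a; cases b; simpa using hab)

/-- The `𝒰`-orbit space `𝒪(𝒰)`: the closure in the full shift `𝒰^G` of the set of
orbit patterns. -/
def orbitSpace {G X : Type u} [Group G] [TopologicalSpace X]
    (Φ : DynAction G X) (𝒰 : Finset (Set X)) : Set (G → CoverElt 𝒰) :=
  closure {u : G → CoverElt 𝒰 | (⋂ g : G, Φ.act g⁻¹ '' (u g).val).Nonempty}

/-- The `(S,𝒰)`-pseudo-orbit space `𝒫𝒪_S(𝒰)`: all patterns of `(S,𝒰)`-pseudo-orbits. -/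
def psOrbitSpace {G X : Type u} [Group G] [TopologicalSpace X]
    (Φ : DynAction G X) (S : Set G) (𝒰 : Finset (Set X)) : Set (G → CoverElt 𝒰) :=
  {u : G → CoverElt 𝒰 | ∃ x : G → X, IsPseudoOrbitPattern Φ S 𝒰 x (fun g => (u g).val)}

theorem CoverElt.ext {X : Type u} {𝒰 : Finset (Set X)} {a b : CoverElt 𝒰} (h : a.val = b.val) :
    a = b := by
  cases a; cases b; congr

section Patterns

variable {G X : Type u} [Group G] [TopologicalSpace X]

theorem DynAction.image_act_inv (Φ : DynAction G X) (g : G) (A : Set X) :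
    Φ.act g⁻¹ '' A = Φ.act g ⁻¹' A :=
  congrFun (Set.image_eq_preimage_of_inverse (f := Φ.act g⁻¹) (g := Φ.act g)
    (fun x => by rw [← Φ.act_mul, mul_inv_cancel, Φ.act_one])
    (fun x => by rw [← Φ.act_mul, inv_mul_cancel, Φ.act_one])) A

/-- `orbitSpace Φ 𝒰` is by definition the closure of this set. -/
def orbitPatterns (Φ : DynAction G X) (𝒰 : Finset (Set X)) : Set (G → CoverElt 𝒰) :=
  {u : G → CoverElt 𝒰 | (⋂ g : G, Φ.act g⁻¹ '' (u g).val).Nonempty}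

theorem mem_orbitPatterns {Φ : DynAction G X} {𝒰 : Finset (Set X)} {u : G → CoverElt 𝒰} :
    u ∈ orbitPatterns Φ 𝒰 ↔ ∃ z : X, ∀ g : G, Φ.act g z ∈ (u g).val := by
  simp [orbitPatterns, Set.Nonempty, DynAction.image_act_inv]

theorem orbitPatterns_subset_orbitSpace (Φ : DynAction G X) (𝒰 : Finset (Set X)) :
    orbitPatterns Φ 𝒰 ⊆ orbitSpace Φ 𝒰 :=
  subset_closure

theorem orbitPatterns_subset_psOrbitSpace (Φ : DynAction G X) (S : Set G)
    (𝒰 : Finset (Set X)) : orbitPatterns Φ 𝒰 ⊆ psOrbitSpace Φ S 𝒰 := by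
  intro u hu
  obtain ⟨z, hz⟩ := mem_orbitPatterns.1 hu
  refine ⟨fun g => Φ.act g z, fun g => (u g).mem, fun g s _ => ⟨hz _, ?_⟩⟩
  rw [← Φ.act_mul]
  exact hz _

theorem isClosed_setOf_mem_val {𝒰 : Finset (Set X)} (h𝒰 : ∀ U ∈ 𝒰, IsClosed U) :
    IsClosed {p : X × CoverElt 𝒰 | p.1 ∈ p.2.val} := by
  have : {p : X × CoverElt 𝒰 | p.1 ∈ p.2.val} = ⋃ c : CoverElt 𝒰, c.val ×ˢ {c} := by
    ext ⟨x, c⟩; simp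
  rw [this]
  exact isClosed_iUnion_of_finite fun c => (h𝒰 _ c.mem).prod isClosed_singleton

/-- The pseudo-orbit space is the projection of a closed set of pairs (pseudo-orbit, pattern)
along the compact factor `X^G`. -/
theorem isClosed_psOrbitSpace [CompactSpace X] (Φ : DynAction G X) (S : Set G)
    {𝒰 : Finset (Set X)} (h𝒰 : ∀ U ∈ 𝒰, IsClosed U) : IsClosed (psOrbitSpace Φ S 𝒰) := by
  let R : Set ((G → X) × (G → CoverElt 𝒰)) := {q | ∀ g : G, ∀ s ∈ S,
    q.1 (s * g) ∈ (q.2 (s * g)).val ∧ Φ.act s (q.1 g) ∈ (q.2 (s * g)).val}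
  have hR : IsClosed R := by
    simp only [R, Set.ofPred_forall, Set.ofPred_and]
    refine isClosed_iInter fun g => isClosed_iInter fun s => isClosed_iInter fun _ => ?_
    have hΦ := Φ.continuous_act s
    exact ((isClosed_setOf_mem_val h𝒰).preimage
        (f := fun q : (G → X) × (G → CoverElt 𝒰) => (q.1 (s * g), q.2 (s * g))) (by fun_prop)).inter
      ((isClosed_setOf_mem_val h𝒰).preimage
        (f := fun q : (G → X) × (G → CoverElt 𝒰) => (Φ.act s (q.1 g), q.2 (s * g))) (by fun_prop))
  have : psOrbitSpace Φ S 𝒰 = Prod.snd '' R := by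
    ext u
    exact ⟨fun ⟨x, hx⟩ => ⟨(x, u), hx.2, rfl⟩,
      fun ⟨q, hq, hqu⟩ => hqu ▸ ⟨q.1, fun g => (q.2 g).mem, hq⟩⟩
  rw [this]
  exact isClosedMap_snd_of_compactSpace R hR

theorem orbitSpace_subset_psOrbitSpace [CompactSpace X] (Φ : DynAction G X) (S : Set G)
    {𝒰 : Finset (Set X)} (h𝒰 : ∀ U ∈ 𝒰, IsClosed U) : orbitSpace Φ 𝒰 ⊆ psOrbitSpace Φ S 𝒰 :=
  closure_minimal (orbitPatterns_subset_psOrbitSpace Φ S 𝒰) (isClosed_psOrbitSpace Φ S h𝒰)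

end Patterns

section Partitions

variable {X : Type u}

theorem Refines.trans {𝒰 𝒱 𝒲 : Finset (Set X)} (h₁ : Refines 𝒲 𝒱) (h₂ : Refines 𝒱 𝒰) :
    Refines 𝒲 𝒰 := by
  intro W hW
  obtain ⟨V, hV, hWV⟩ := h₁ W hW
  obtain ⟨U, hU, hVU⟩ := h₂ V hV
  exact ⟨U, hU, hWV.trans hVU⟩

noncomputable def fibers {Y : Type*} [Finite Y] (f : X → Y) : Finset (Set X) :=
  ((Set.toFinite (Set.range f)).image fun y => f ⁻¹' {y}).toFinset

theorem mem_fibers {Y : Type*} [Finite Y] {f : X → Y} {U : Set X} :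
    U ∈ fibers f ↔ ∃ x, f ⁻¹' {f x} = U := by
  simp [fibers]

variable [TopologicalSpace X]

theorem IsClopenPartition.isFOC {𝒰 : Finset (Set X)} (h : IsClopenPartition 𝒰) : IsFOC 𝒰 :=
  ⟨fun U hU => (h.1 U hU).1.isOpen, h.2.1⟩

theorem IsClopenPartition.exists_mem {𝒰 : Finset (Set X)} (h : IsClopenPartition 𝒰) (x : X) :
    ∃ U ∈ 𝒰, x ∈ U :=
  Set.sUnion_eq_univ_iff.1 h.2.1 x

theorem IsClopenPartition.eq_of_mem {𝒰 : Finset (Set X)} (h : IsClopenPartition 𝒰)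
    {U V : Set X} (hU : U ∈ 𝒰) (hV : V ∈ 𝒰) {x : X} (hxU : x ∈ U) (hxV : x ∈ V) : U = V := by
  by_contra hUV
  exact Set.eq_empty_iff_forall_notMem.1 (h.2.2 U hU V hV hUV) x ⟨hxU, hxV⟩

theorem isClopenPartition_fibers {Y : Type*} [TopologicalSpace Y] [DiscreteTopology Y] [Finite Y]
    {f : X → Y} (hf : Continuous f) : IsClopenPartition (fibers f) := by
  refine ⟨?_, ?_, ?_⟩
  · rintro U hU
    obtain ⟨x, rfl⟩ := mem_fibers.1 hU
    exact ⟨(isClopen_discrete _).preimage hf, x, rfl⟩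
  · exact Set.eq_univ_of_forall fun x => ⟨_, mem_fibers.2 ⟨x, rfl⟩, rfl⟩
  · rintro U hU V hV hUV
    obtain ⟨x, rfl⟩ := mem_fibers.1 hU
    obtain ⟨y, rfl⟩ := mem_fibers.1 hV
    refine Set.eq_empty_of_forall_notMem fun z ⟨hzx, hzy⟩ => hUV ?_
    simp only [Set.mem_preimage, Set.mem_singleton_iff] at hzx hzy
    rw [← hzx, ← hzy]

/-- Cover `X` by finitely many clopen sets `C i`, each inside a member of `𝒱`; the fibres of
`x ↦ (i ↦ [x ∈ C i])` form the partition. -/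
theorem exists_isClopenPartition_refines [CompactSpace X] [T2Space X]
    [TotallyDisconnectedSpace X] {𝒱 : Finset (Set X)} (h𝒱 : IsFOC 𝒱) :
    ∃ 𝒲 : Finset (Set X), IsClopenPartition 𝒲 ∧ Refines 𝒲 𝒱 := by
  have hnhd : ∀ x : X, ∃ C : Set X, IsClopen C ∧ x ∈ C ∧ ∃ V ∈ 𝒱, C ⊆ V := by
    intro x
    obtain ⟨V, hV, hxV⟩ := Set.sUnion_eq_univ_iff.1 h𝒱.2 x
    obtain ⟨C, hC, hxC, hCV⟩ := compact_exists_isClopen_in_isOpen (h𝒱.1 V hV) hxV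
    exact ⟨C, hC, hxC, V, hV, hCV⟩
  choose C hC hxC hCV using hnhd
  obtain ⟨t, ht⟩ := isCompact_univ.elim_finite_subcover C (fun x => (hC x).isOpen)
    fun x _ => Set.mem_iUnion.2 ⟨x, hxC x⟩
  let f : X → t → Bool := fun x i => (C i).boolIndicator x
  have hf : Continuous f :=
    continuous_pi fun i => (continuous_boolIndicator_iff_isClopen _).2 (hC i)
  refine ⟨fibers f, isClopenPartition_fibers hf, fun W hW => ?_⟩
  obtain ⟨x, rfl⟩ := mem_fibers.1 hW
  obtain ⟨i, hi, hxi⟩ := Set.mem_iUnion₂.1 (ht (Set.mem_univ x))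
  obtain ⟨V, hV, hiV⟩ := hCV i
  refine ⟨V, hV, fun y hy => hiV ?_⟩
  have hfi := congrFun hy ⟨i, hi⟩
  simpa [f, Set.boolIndicator, hxi] using hfi

end Partitions

section Shadowing

variable {G X : Type u} [Group G] [TopologicalSpace X]

theorem IsPseudoOrbitPattern.isPseudoOrbit_of_refines {Φ : DynAction G X} {S : Set G}
    {𝒰 𝒱 : Finset (Set X)} {x : G → X} {U : G → Set X}
    (h : IsPseudoOrbitPattern Φ S 𝒰 x U) (h𝒰𝒱 : Refines 𝒰 𝒱) : IsPseudoOrbit Φ S 𝒱 x := by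
  choose V hV hUV using fun g => h𝒰𝒱 (U g) (h.1 g)
  exact ⟨V, hV, fun g s hs => ⟨hUV _ (h.2 g s hs).1, hUV _ (h.2 g s hs).2⟩⟩

/-- For nonempty `S` the pseudo-orbit of a pattern already runs through it (`x (s * (s⁻¹ * g))`);
for empty `S` there is no constraint, so any choice of points will do. -/
theorem exists_isPseudoOrbitPattern_of_mem_psOrbitSpace {Φ : DynAction G X} {S : Set G}
    {𝒰 : Finset (Set X)} (h𝒰 : ∀ U ∈ 𝒰, U.Nonempty) {u : G → CoverElt 𝒰}
    (hu : u ∈ psOrbitSpace Φ S 𝒰) : ∃ x : G → X,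
      IsPseudoOrbitPattern Φ S 𝒰 x (fun g => (u g).val) ∧ ∀ g, x g ∈ (u g).val := by
  obtain ⟨x, hx⟩ := hu
  rcases S.eq_empty_or_nonempty with rfl | ⟨s, hs⟩
  · choose y hy using fun g => h𝒰 _ (u g).mem
    exact ⟨y, ⟨fun g => (u g).mem, fun _ _ h => h.elim⟩, hy⟩
  · refine ⟨x, hx, fun g => ?_⟩
    simpa using (hx.2 (s⁻¹ * g) s hs).1

theorem orbitPatterns_subset_image_orbitPatterns (Φ : DynAction G X)
    {𝒰 𝒱 : Finset (Set X)} (h𝒰 : IsClopenPartition 𝒰) (h𝒱 : IsClopenPartition 𝒱)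
    (ι : CoverElt 𝒱 → CoverElt 𝒰) (hι : ∀ V, V.val ⊆ (ι V).val) :
    orbitPatterns Φ 𝒰 ⊆ (fun (v : G → CoverElt 𝒱) g => ι (v g)) '' orbitPatterns Φ 𝒱 := by
  intro u hu
  obtain ⟨z, hz⟩ := mem_orbitPatterns.1 hu
  choose V hV hzV using fun g => h𝒱.exists_mem (Φ.act g z)
  refine ⟨fun g => ⟨V g, hV g⟩, mem_orbitPatterns.2 ⟨z, hzV⟩, funext fun g => ?_⟩
  exact CoverElt.ext (h𝒰.eq_of_mem (ι _).mem (u g).mem (hι _ (hzV g)) (hz g))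

/-- The coarsened pattern of a fine pseudo-orbit is the orbit pattern of a shadowing point. -/
theorem image_psOrbitSpace_subset_orbitPatterns (Φ : DynAction G X) (S : Set G)
    {𝒰 𝒱 𝒲 : Finset (Set X)} (h𝒰 : IsClopenPartition 𝒰) (h𝒲 : IsClopenPartition 𝒲)
    (h𝒲𝒱 : Refines 𝒲 𝒱)
    (hshadow : ∀ x : G → X, IsPseudoOrbit Φ S 𝒱 x → ∃ z : X, Shadows Φ 𝒰 z x)
    (ι : CoverElt 𝒲 → CoverElt 𝒰) (hι : ∀ W, W.val ⊆ (ι W).val) :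
    (fun (w : G → CoverElt 𝒲) g => ι (w g)) '' psOrbitSpace Φ S 𝒲 ⊆ orbitPatterns Φ 𝒰 := by
  rintro _ ⟨w, hw, rfl⟩
  obtain ⟨x, hx, hxw⟩ :=
    exists_isPseudoOrbitPattern_of_mem_psOrbitSpace (fun W hW => (h𝒲.1 W hW).2) hw
  obtain ⟨z, hz⟩ := hshadow x (hx.isPseudoOrbit_of_refines h𝒲𝒱)
  refine mem_orbitPatterns.2 ⟨z, fun g => ?_⟩
  obtain ⟨U, hU, hzU, hxU⟩ := hz g
  exact h𝒰.eq_of_mem hU (ι _).mem hxU (hι _ (hxw g)) ▸ hzU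

end Shadowing

section InverseSystem

variable {G X Λ : Type u} [Group G] [TopologicalSpace X] [CompactSpace X] [Preorder Λ]
  {Φ : DynAction G X} {S : Set G} {𝒰 : Λ → Finset (Set X)}
  {ι : ∀ {l m : Λ}, l ≤ m → CoverElt (𝒰 m) → CoverElt (𝒰 l)}

theorem exists_image_psOrbitSpace_subset_orbitPatterns [T2Space X] [TotallyDisconnectedSpace X]
    [IsDirected Λ (· ≤ ·)] (hpart : ∀ l : Λ, IsClopenPartition (𝒰 l))
    (hmono : ∀ l m : Λ, l ≤ m → Refines (𝒰 m) (𝒰 l))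
    (hcof : ∀ 𝒱 : Finset (Set X), IsClopenPartition 𝒱 → ∃ l : Λ, Refines (𝒰 l) 𝒱)
    (hι : ∀ {l m : Λ} (h : l ≤ m) (V : CoverElt (𝒰 m)), V.val ⊆ (ι h V).val)
    (hsh : ShadowingProperty Φ S) (l : Λ) :
    ∃ m : Λ, ∃ h : l ≤ m, ∀ (n : Λ) (h' : m ≤ n),
      (fun (w : G → CoverElt (𝒰 n)) g => ι (h.trans h') (w g)) '' psOrbitSpace Φ S (𝒰 n) ⊆
        orbitPatterns Φ (𝒰 l) := by
  obtain ⟨𝒱, h𝒱, hshadow⟩ := hsh (𝒰 l) (hpart l).isFOC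
  obtain ⟨𝒲, h𝒲, h𝒲𝒱⟩ := exists_isClopenPartition_refines h𝒱
  obtain ⟨k, hk⟩ := hcof 𝒲 h𝒲
  obtain ⟨m, hlm, hkm⟩ := directed_of (· ≤ ·) l k
  refine ⟨m, hlm, fun n hmn => ?_⟩
  have hn𝒱 : Refines (𝒰 n) 𝒱 := ((hmono k n (hkm.trans hmn)).trans hk).trans h𝒲𝒱
  exact image_psOrbitSpace_subset_orbitPatterns Φ S (hpart l) (hpart n) hn𝒱 hshadow _ (hι _)

def IsMittagLeffler (ι : ∀ {l m : Λ}, l ≤ m → CoverElt (𝒰 m) → CoverElt (𝒰 l))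
    (Y : ∀ l : Λ, Set (G → CoverElt (𝒰 l))) : Prop :=
  ∀ l : Λ, ∃ m : Λ, ∃ h : l ≤ m, ∀ (n : Λ) (h' : m ≤ n),
    (fun (u : G → CoverElt (𝒰 n)) g => ι (h.trans h') (u g)) '' Y n =
      (fun (u : G → CoverElt (𝒰 m)) g => ι h (u g)) '' Y m

/-- From some level on, the image at level `l` is exactly the set of orbit patterns. -/
theorem isMittagLeffler_of_orbitPatterns_subset [T2Space X] [TotallyDisconnectedSpace X]
    [IsDirected Λ (· ≤ ·)] (hpart : ∀ l : Λ, IsClopenPartition (𝒰 l))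
    (hmono : ∀ l m : Λ, l ≤ m → Refines (𝒰 m) (𝒰 l))
    (hcof : ∀ 𝒱 : Finset (Set X), IsClopenPartition 𝒱 → ∃ l : Λ, Refines (𝒰 l) 𝒱)
    (hι : ∀ {l m : Λ} (h : l ≤ m) (V : CoverElt (𝒰 m)), V.val ⊆ (ι h V).val)
    (hsh : ShadowingProperty Φ S) {Y : ∀ l : Λ, Set (G → CoverElt (𝒰 l))}
    (hlower : ∀ l, orbitPatterns Φ (𝒰 l) ⊆ Y l) (hupper : ∀ l, Y l ⊆ psOrbitSpace Φ S (𝒰 l)) :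
    IsMittagLeffler ι Y := by
  intro l
  obtain ⟨m, hlm, hsub⟩ :=
    exists_image_psOrbitSpace_subset_orbitPatterns hpart hmono hcof hι hsh l
  have himage : ∀ (n : Λ) (hln : l ≤ n), m ≤ n →
      (fun (u : G → CoverElt (𝒰 n)) g => ι hln (u g)) '' Y n = orbitPatterns Φ (𝒰 l) :=
    fun n hln hmn => ((Set.image_mono (hupper n)).trans (hsub n hmn)).antisymm <|
      (orbitPatterns_subset_image_orbitPatterns Φ (hpart l) (hpart n) _ (hι _)).trans
        (Set.image_mono (hlower n))
  exact ⟨m, hlm, fun n hmn => (himage n _ hmn).trans (himage m hlm le_rfl).symm⟩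

end InverseSystem

theorem invlim_psOrbit_conjugate_invlim_orbit_general
    {G X : Type} [Group G] [TopologicalSpace X]
    [CompactSpace X] [T2Space X] [TotallyDisconnectedSpace X]
    (Φ : DynAction G X) (S : Finset G)
    {Λ : Type} [Preorder Λ] [IsDirected Λ (· ≤ ·)]
    (𝒰 : Λ → Finset (Set X)) (hpart : ∀ l : Λ, IsClopenPartition (𝒰 l))
    (hmono : ∀ l m : Λ, l ≤ m → Refines (𝒰 m) (𝒰 l))
    (hcof : ∀ 𝒱 : Finset (Set X), IsClopenPartition 𝒱 → ∃ l : Λ, Refines (𝒰 l) 𝒱)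
    (ι : ∀ {l m : Λ}, l ≤ m → CoverElt (𝒰 m) → CoverElt (𝒰 l))
    (hι : ∀ {l m : Λ} (h : l ≤ m) (V : CoverElt (𝒰 m)), V.val ⊆ (ι h V).val)
    (hsh : ShadowingProperty Φ (S : Set G)) :
    (∃ F : {u : ∀ l : Λ, G → CoverElt (𝒰 l) //
              (∀ l : Λ, u l ∈ psOrbitSpace Φ (S : Set G) (𝒰 l)) ∧
              ∀ (l m : Λ) (h : l ≤ m), (fun g => ι h (u m g)) = u l} →
           {u : ∀ l : Λ, G → CoverElt (𝒰 l) //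
              (∀ l : Λ, u l ∈ orbitSpace Φ (𝒰 l)) ∧
              ∀ (l m : Λ) (h : l ≤ m), (fun g => ι h (u m g)) = u l},
        Continuous F ∧ Function.Bijective F ∧
        ∀ (g : G) (u v), (v.1 = fun l => shift G (CoverElt (𝒰 l)) g (u.1 l)) →
          ((F v).1 = fun l => shift G (CoverElt (𝒰 l)) g ((F u).1 l))) ∧
    (∀ l : Λ, ∃ m : Λ, ∃ h : l ≤ m, ∀ (n : Λ) (h' : m ≤ n),
      (fun (u : G → CoverElt (𝒰 n)) => fun g => ι (h.trans h') (u g)) ''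
          psOrbitSpace Φ (S : Set G) (𝒰 n)
        = (fun (u : G → CoverElt (𝒰 m)) => fun g => ι h (u g)) ''
            psOrbitSpace Φ (S : Set G) (𝒰 m)) ∧
    (∀ l : Λ, ∃ m : Λ, ∃ h : l ≤ m, ∀ (n : Λ) (h' : m ≤ n),
      (fun (u : G → CoverElt (𝒰 n)) => fun g => ι (h.trans h') (u g)) ''
          orbitSpace Φ (𝒰 n)
        = (fun (u : G → CoverElt (𝒰 m)) => fun g => ι h (u g)) '' orbitSpace Φ (𝒰 m)) := by
  have hclosed : ∀ l, ∀ U ∈ 𝒰 l, IsClosed U := fun l U hU => ((hpart l).1 U hU).1.isClosed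
  have hthreads : {u : ∀ l : Λ, G → CoverElt (𝒰 l) |
      (∀ l : Λ, u l ∈ psOrbitSpace Φ (S : Set G) (𝒰 l)) ∧
        ∀ (l m : Λ) (h : l ≤ m), (fun g => ι h (u m g)) = u l} =
      {u | (∀ l : Λ, u l ∈ orbitSpace Φ (𝒰 l)) ∧
        ∀ (l m : Λ) (h : l ≤ m), (fun g => ι h (u m g)) = u l} := by
    refine Set.ext fun u => and_congr_left fun hcompat => ⟨fun hps l => ?_, fun horb l =>
      orbitSpace_subset_psOrbitSpace Φ _ (hclosed l) (horb l)⟩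
    obtain ⟨m, h, hsub⟩ :=
      exists_image_psOrbitSpace_subset_orbitPatterns hpart hmono hcof hι hsh l
    exact hcompat l m h ▸ orbitPatterns_subset_orbitSpace Φ _ (hsub m le_rfl ⟨_, hps m, rfl⟩)
  let F := Homeomorph.setCongr hthreads
  refine ⟨⟨F, F.continuous, F.bijective, fun _ _ _ hv => hv⟩, ?_, ?_⟩
  · exact isMittagLeffler_of_orbitPatterns_subset hpart hmono hcof hι hsh
      (fun _ => orbitPatterns_subset_psOrbitSpace Φ _ _) (fun _ => subset_rfl)
  · exact isMittagLeffler_of_orbitPatterns_subset hpart hmono hcof hι hsh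
      (fun _ => orbitPatterns_subset_orbitSpace Φ _)
      (fun l => orbitSpace_subset_psOrbitSpace Φ _ (hclosed l))

/-- **Theorem 4.4.** With the `S`-shadowing property, the inverse limit of the
pseudo-orbit spaces is conjugate to the inverse limit of the orbit spaces, and both
inverse systems satisfy the ML condition. -/
theorem invlim_psOrbit_conjugate_invlim_orbit
    {G X : Type} [Group G] [Countable G] [TopologicalSpace X]
    [CompactSpace X] [T2Space X] [TotallyDisconnectedSpace X]
    (Φ : DynAction G X) (S : Finset G)
    {Λ : Type} [Preorder Λ] [IsDirected Λ (· ≤ ·)]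
    (𝒰 : Λ → Finset (Set X)) (hpart : ∀ l : Λ, IsClopenPartition (𝒰 l))
    (hmono : ∀ l m : Λ, l ≤ m → Refines (𝒰 m) (𝒰 l))
    (hcof : ∀ 𝒱 : Finset (Set X), IsClopenPartition 𝒱 → ∃ l : Λ, Refines (𝒰 l) 𝒱)
    (ι : ∀ {l m : Λ}, l ≤ m → CoverElt (𝒰 m) → CoverElt (𝒰 l))
    (hι : ∀ {l m : Λ} (h : l ≤ m) (V : CoverElt (𝒰 m)), V.val ⊆ (ι h V).val)
    (hsh : ShadowingProperty Φ (S : Set G)) :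
    (∃ F : {u : ∀ l : Λ, G → CoverElt (𝒰 l) //
              (∀ l : Λ, u l ∈ psOrbitSpace Φ (S : Set G) (𝒰 l)) ∧
              ∀ (l m : Λ) (h : l ≤ m), (fun g => ι h (u m g)) = u l} →
           {u : ∀ l : Λ, G → CoverElt (𝒰 l) //
              (∀ l : Λ, u l ∈ orbitSpace Φ (𝒰 l)) ∧
              ∀ (l m : Λ) (h : l ≤ m), (fun g => ι h (u m g)) = u l},
        Continuous F ∧ Function.Bijective F ∧
        ∀ (g : G) (u v), (v.1 = fun l => shift G (CoverElt (𝒰 l)) g (u.1 l)) →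
          ((F v).1 = fun l => shift G (CoverElt (𝒰 l)) g ((F u).1 l))) ∧
    (∀ l : Λ, ∃ m : Λ, ∃ h : l ≤ m, ∀ (n : Λ) (h' : m ≤ n),
      (fun (u : G → CoverElt (𝒰 n)) => fun g => ι (h.trans h') (u g)) ''
          psOrbitSpace Φ (S : Set G) (𝒰 n)
        = (fun (u : G → CoverElt (𝒰 m)) => fun g => ι h (u g)) ''
            psOrbitSpace Φ (S : Set G) (𝒰 m)) ∧
    (∀ l : Λ, ∃ m : Λ, ∃ h : l ≤ m, ∀ (n : Λ) (h' : m ≤ n),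
      (fun (u : G → CoverElt (𝒰 n)) => fun g => ι (h.trans h') (u g)) ''
          orbitSpace Φ (𝒰 n)
        = (fun (u : G → CoverElt (𝒰 m)) => fun g => ι h (u g)) '' orbitSpace Φ (𝒰 m)) :=
  invlim_psOrbit_conjugate_invlim_orbit_general Φ S 𝒰 hpart hmono hcof ι hι hsh
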